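/- Let g be a vertex-numbered hypergraph and let e1, e2 be distinct edges of g with att(e1) = att(e2) and lab(e1) = lab(e2), and let h be a vertex-numbered hypergraph with rank(h) = rank(e1) = rank(e2). Then the two graphs (g[e1/h])[e2/h] and (g[e2/h])[e1/h] obtained by performing the two vertex-numbered replacements in either order are isomorphic via an isomorphism that is the identity on vertices; in particular, the order in which edges with equal attachment sequences and equal labels are replaced is irrelevant for the resulting graph. -/

import Mathlib

/-! Formalization of SL HR grammars (straight-line hyperedge replacement grammars),
their derivation trees, traversal, and tableaux data structures. -/

universe u v

/-- A (hyper)graph over a label alphabet `L`: vertices and edges are natural numbers,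
`att` gives the attachment sequence of an edge, `lab` its label, and `ext` is the
sequence of external vertices. -/
structure HGraph (L : Type u) where
  V : Finset ℕ
  E : Finset ℕ
  att : ℕ → List ℕ
  lab : ℕ → L
  ext : List ℕ

namespace HGraph

variable {L : Type u}

/-- Well-formedness of a hypergraph with respect to a rank function on labels:
nonempty vertex set, attachments are repetition-free sequences of vertices of
length equal to the rank of the label (ranks are `≥ 1`), and the external
vertices form a repetition-free sequence of vertices. -/
def WF (rank : L → ℕ) (g : HGraph L) : Prop :=
  g.V.Nonempty ∧
  (∀ e ∈ g.E, ∀ v ∈ g.att e, v ∈ g.V) ∧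
  (∀ e ∈ g.E, (g.att e).Nodup) ∧
  (∀ e ∈ g.E, (g.att e).length = rank (g.lab e)) ∧
  (∀ a : L, 1 ≤ rank a) ∧
  (∀ v ∈ g.ext, v ∈ g.V) ∧
  g.ext.Nodup

/-- The rank of a hypergraph is its number of external vertices. -/
def rank (g : HGraph L) : ℕ := g.ext.length

/-- The vertex-numbered convention: a hypergraph with `n` vertices and `k` external
vertices has `V = {1,…,n}` and `ext = (n-k+1)⋯n`. -/
def VertexNumbered (g : HGraph L) (n : ℕ) : Prop :=
  g.V = Finset.Icc 1 n ∧
  g.ext = (List.range g.ext.length).map (fun i => n - g.ext.length + 1 + i)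

/-- A hypergraph is unique-labeled if for every vertex `x`, label `a` and position `i`
there is at most one edge labeled `a` whose `i`-th attached vertex is `x`. -/
def UniqueLabeled (g : HGraph L) : Prop :=
  ∀ (x : ℕ) (a : L) (i : ℕ), ∀ e₁ ∈ g.E, ∀ e₂ ∈ g.E,
    g.lab e₁ = a → g.lab e₂ = a →
    (g.att e₁)[i]? = some x → (g.att e₂)[i]? = some x → e₁ = e₂

/-- `x` and `y` are `a`-`k`-`l`-neighbors: some `a`-labeled edge has `x` attached
at position `k` and `y` attached at position `l` (positions are 0-based). -/
def Neighbors (g : HGraph L) (a : L) (k l : ℕ) (x y : ℕ) : Prop :=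
  ∃ e ∈ g.E, g.lab e = a ∧ (g.att e)[k]? = some x ∧ (g.att e)[l]? = some y

/-- An isomorphism of hypergraphs. -/
structure Iso (g h : HGraph L) where
  vmap : ℕ → ℕ
  emap : ℕ → ℕ
  vmap_bij : Set.BijOn vmap ↑g.V ↑h.V
  emap_bij : Set.BijOn emap ↑g.E ↑h.E
  att_map : ∀ e ∈ g.E, h.att (emap e) = (g.att e).map vmap
  lab_map : ∀ e ∈ g.E, h.lab (emap e) = g.lab e
  ext_map : h.ext = g.ext.map vmap

def Isomorphic (g h : HGraph L) : Prop := Nonempty (Iso g h)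

/-- `res` is (an instance of) the replacement of edge `e` of `g` by (a disjoint copy of)
the graph `h`: `e` is deleted, a renamed copy of `h` is added, the `i`-th external
vertex of the copy is identified with the `i`-th attached vertex of `e`, and the
external vertices of the result are those of `g`. -/
def IsReplacement (g : HGraph L) (e : ℕ) (h : HGraph L) (res : HGraph L) : Prop :=
  (g.att e).length = h.ext.length ∧
  ∃ (ρ : ℕ → ℕ) (η : ℕ → ℕ),
    Set.InjOn ρ ↑h.V ∧ Set.InjOn η ↑h.E ∧
    (∀ (i x : ℕ), h.ext[i]? = some x → (g.att e)[i]? = some (ρ x)) ∧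
    (∀ x ∈ h.V, x ∉ h.ext → ρ x ∉ g.V) ∧
    (∀ f ∈ h.E, η f ∉ g.E) ∧
    res.V = g.V ∪ h.V.image ρ ∧
    res.E = g.E.erase e ∪ h.E.image η ∧
    (∀ f ∈ g.E.erase e, res.att f = g.att f ∧ res.lab f = g.lab f) ∧
    (∀ f ∈ h.E, res.att (η f) = (h.att f).map ρ ∧ res.lab (η f) = h.lab f) ∧
    res.ext = g.ext

/-- The canonical vertex renaming used in vertex-numbered replacement:
the `i`-th external vertex of `h` is renamed to the `i`-th attached vertex of `e`,
every other (internal) vertex `x` of `h` is renamed to `n + x`. -/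
def renameVN (g : HGraph L) (e : ℕ) (h : HGraph L) (n : ℕ) (x : ℕ) : ℕ :=
  if x ∈ h.ext then (g.att e).getD (List.idxOf x h.ext) 0 else n + x

/-- A fresh edge identifier for `g`. -/
def freshE (g : HGraph L) : ℕ := g.E.sup id + 1

/-- Vertex-numbered replacement `g[e/h]`, where `n` is the number of vertices of `g`:
internal vertices of the copy of `h` are renumbered consecutively from `n+1`. -/
def replaceVN (g : HGraph L) (e : ℕ) (h : HGraph L) (n : ℕ) : HGraph L where
  V := g.V ∪ (h.V.filter (fun x => x ∉ h.ext)).image (fun x => n + x)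
  E := g.E.erase e ∪ h.E.image (fun f => freshE g + f)
  att := fun f => if f ∈ g.E.erase e then g.att f
    else (h.att (f - freshE g)).map (renameVN g e h n)
  lab := fun f => if f ∈ g.E.erase e then g.lab f else h.lab (f - freshE g)
  ext := g.ext

end HGraph

/-- A hyperedge replacement grammar over terminal alphabet `σ` and nonterminal
alphabet `ν`: each symbol has a rank, each nonterminal `A` has exactly one rule
`A → rhs A`, and there is a start hypergraph. -/
structure HRG (σ : Type u) (ν : Type v) where
  rankT : σ → ℕ
  rankN : ν → ℕ
  rhs : ν → HGraph (σ ⊕ ν)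
  start : HGraph (σ ⊕ ν)

namespace HRG

variable {σ : Type u} {ν : Type v}

/-- The rank function on the combined label alphabet. -/
def rankL (G : HRG σ ν) : σ ⊕ ν → ℕ := Sum.elim G.rankT G.rankN

/-- The graph associated with a derivation-tree root: the start graph for `none`,
the right-hand side of `A` for `some A`. -/
def graphOf (G : HRG σ ν) : Option ν → HGraph (σ ⊕ ν)
  | none => G.start
  | some A => G.rhs A

/-- The rank of a derivation-tree root (the start graph has rank 0). -/
def rankO (G : HRG σ ν) : Option ν → ℕ
  | none => 0
  | some A => G.rankN A

/-- Well-formedness of an HR grammar. -/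
def WF (G : HRG σ ν) : Prop :=
  (∀ a : σ, 1 ≤ G.rankT a) ∧ (∀ A : ν, 1 ≤ G.rankN A) ∧
  (∀ A : ν, (G.rhs A).WF G.rankL) ∧
  (∀ A : ν, (G.rhs A).ext.length = G.rankN A) ∧
  G.start.WF G.rankL ∧ G.start.ext = []

/-- `A₁ ≤_NT A₂`: some edge of `rhs A₁` is labeled by the nonterminal `A₂`. -/
def ntStep (G : HRG σ ν) (A B : ν) : Prop :=
  ∃ e ∈ (G.rhs A).E, (G.rhs A).lab e = Sum.inr B

/-- Some edge of the start graph is labeled by the nonterminal `B`. -/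
def startStep (G : HRG σ ν) (B : ν) : Prop :=
  ∃ e ∈ G.start.E, G.start.lab e = Sum.inr B

/-- Straight-line restriction: the nonterminal dependency relation is acyclic
(it admits a strictly decreasing rank into `ℕ`), and every nonterminal is
reachable from the start graph (the DAG is rooted at `S`). -/
def SL (G : HRG σ ν) : Prop :=
  (∃ d : ν → ℕ, ∀ A B : ν, G.ntStep A B → d B < d A) ∧
  (∀ B : ν, ∃ A : ν, G.startStep A ∧ Relation.ReflTransGen G.ntStep A B)

/-- One derivation step: replace some nonterminal edge by the right-hand side of
its rule. -/
def Derives (G : HRG σ ν) (g g' : HGraph (σ ⊕ ν)) : Prop :=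
  ∃ e ∈ g.E, ∃ B : ν, g.lab e = Sum.inr B ∧ HGraph.IsReplacement g e (G.rhs B) g'

/-- A graph all of whose edges are labeled by terminals. -/
def TerminalGraph (g : HGraph (σ ⊕ ν)) : Prop :=
  ∀ e ∈ g.E, ∃ a : σ, g.lab e = Sum.inl a

/-- The language of `G`: all terminal-labeled graphs derivable from the start graph. -/
def Lang (G : HRG σ ν) : Set (HGraph (σ ⊕ ν)) :=
  {g | Relation.ReflTransGen G.Derives G.start g ∧ TerminalGraph g}

/-- Lexicographic comparison of attachment sequences. -/
def listLexLE : List ℕ → List ℕ → Bool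
  | [], _ => true
  | _ :: _, [] => false
  | a :: as, b :: bs => if a < b then true else if b < a then false else listLexLE as bs

/-- The derivation order `≤_dt` on edges: lexicographic on attachment sequences,
ties broken by the fixed linear order on nonterminals. -/
def dtLE [LinearOrder ν] (g : HGraph (σ ⊕ ν)) (e f : ℕ) : Bool :=
  if g.att e = g.att f then
    match g.lab e, g.lab f with
    | Sum.inr B, Sum.inr C => decide (B ≤ C)
    | _, _ => true
  else listLexLE (g.att e) (g.att f)

/-- The nonterminal edges of `g`, listed in the derivation order `≤_dt`. -/
def ntEdgeList [LinearOrder ν] (g : HGraph (σ ⊕ ν)) : List ℕ :=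
  ((g.E.filter (fun e => (g.lab e).isRight = true)).sort (· ≤ ·)).mergeSort (dtLE g)

/-- Replace all nonterminal edges of `g`, in derivation order, by `val` of their
labels, using vertex-numbered replacement. -/
def expandVal (G : HRG σ ν) [LinearOrder ν] (val : ν → HGraph (σ ⊕ ν))
    (g : HGraph (σ ⊕ ν)) : HGraph (σ ⊕ ν) :=
  (ntEdgeList g).foldl (fun acc e =>
    match acc.lab e with
    | Sum.inr B => HGraph.replaceVN acc e (val B) acc.V.card
    | Sum.inl _ => acc) g

/-- `val` is the family `(val A)_{A ∈ N}` defined by the straight-line grammar: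
`val A` is obtained from `rhs A` by replacing all its nonterminal edges, in
derivation order, by the values of their labels. -/
def ValFamily (G : HRG σ ν) [LinearOrder ν] (val : ν → HGraph (σ ⊕ ν)) : Prop :=
  ∀ A : ν, val A = G.expandVal val (G.rhs A)

/-- The number of internal vertices of `val A`. -/
def iNodes (val : ν → HGraph (σ ⊕ ν)) (A : ν) : ℕ :=
  ((val A).V \ (val A).ext.toFinset).card

/-- The sequence of nonterminals labeling the derivation-tree nodes along the
Dewey address `u` (children are numbered from 0 in derivation order), starting
from a root labeled by the graph `g`. `none` if the address is invalid. -/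
def ntSeq (G : HRG σ ν) [LinearOrder ν] : HGraph (σ ⊕ ν) → List ℕ → Option (List ν)
  | _, [] => some []
  | g, i :: u =>
    match (ntEdgeList g)[i]? with
    | some e =>
      match g.lab e with
      | Sum.inr B => (ntSeq G (G.rhs B) u).map (fun Bs => B :: Bs)
      | Sum.inl _ => none
    | none => none

/-- The graph `g_u` labeling the derivation-tree node at Dewey address `u`
(starting from a root labeled by `g`), if the address is valid. -/
def graphAt (G : HRG σ ν) [LinearOrder ν] : HGraph (σ ⊕ ν) → List ℕ → Option (HGraph (σ ⊕ ν))
  | g, [] => some g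
  | g, i :: u =>
    match (ntEdgeList g)[i]? with
    | some e =>
      match g.lab e with
      | Sum.inr B => graphAt G (G.rhs B) u
      | Sum.inl _ => none
    | none => none

/-- The nonterminal (or start, `none`) labeling the derivation-tree node at address
`u` in the derivation tree rooted at `root`. -/
def ntAtNode (G : HRG σ ν) [LinearOrder ν] (root : Option ν) (u : List ℕ) :
    Option (Option ν) :=
  (ntSeq G (G.graphOf root) u).map (fun Bs => (Bs.map some).getLastD root)

/-- `iN`-value of the label of edge `e` (0 for terminal labels). -/
def iNOf (iN : ν → ℕ) (g : HGraph (σ ⊕ ν)) (e : ℕ) : ℕ :=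
  match g.lab e with
  | Sum.inr B => iN B
  | Sum.inl _ => 0

/-- `first(u)` relative to the derivation tree rooted at `g`, where `iN B` is the
number of internal vertices of `val B`:
`first(ε) = 0` and `first(v.i) = first(v) + |V_{g_v}| - |ext_{g_v}| + Σ_{j<i} iN(lab e_j)`. -/
def firstAux (G : HRG σ ν) [LinearOrder ν] (iN : ν → ℕ) :
    HGraph (σ ⊕ ν) → List ℕ → ℕ
  | _, [] => 0
  | g, i :: u =>
    (g.V.card - g.ext.length + (((ntEdgeList g).take i).map (iNOf iN g)).sum) +
      (match (ntEdgeList g)[i]? with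
       | some e =>
         (match g.lab e with
          | Sum.inr B => firstAux G iN (G.rhs B) u
          | Sum.inl _ => 0)
       | none => 0)

/-- `TraverseRel G a k l g x u y` formalizes `traverse_{k,l}(A,x,a) = (u,y)` for the
rule with right-hand side `g`: either `g` itself contains an `a`-labeled edge with
`x` at position `k` and `y` at position `l` (then `u = ε`), or `x` is the `j`-th
attached vertex of the `i`-th nonterminal edge `e` of `g` and the traversal
continues from the `j`-th external vertex of `rhs (lab e)`. -/
inductive TraverseRel (G : HRG σ ν) [LinearOrder ν] (a : σ) (k l : ℕ) :
    HGraph (σ ⊕ ν) → ℕ → List ℕ → ℕ → Prop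
  | base {g : HGraph (σ ⊕ ν)} {x y e : ℕ}
      (he : e ∈ g.E) (hlab : g.lab e = Sum.inl a)
      (hk : (g.att e)[k]? = some x) (hl : (g.att e)[l]? = some y) :
      TraverseRel G a k l g x [] y
  | step {g : HGraph (σ ⊕ ν)} {x i e : ℕ} {B : ν} {j z : ℕ} {v : List ℕ} {y : ℕ}
      (hi : (ntEdgeList g)[i]? = some e) (hB : g.lab e = Sum.inr B)
      (hx : (g.att e)[j]? = some x) (hz : (G.rhs B).ext[j]? = some z)
      (hrec : TraverseRel G a k l (G.rhs B) z v y) :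
      TraverseRel G a k l g x (i :: v) y

/-- `InternalRel G g0 u x v y` formalizes `internal(u,x) = (v,y)` in the derivation
tree rooted at `g0`: the vertex `x` of `g_u` is identified, through the chain of
external-vertex identifications of the derivation, with the internal vertex `y`
of `g_v` at the ancestor `v` of `u`. -/
inductive InternalRel (G : HRG σ ν) [LinearOrder ν] (g0 : HGraph (σ ⊕ ν)) :
    List ℕ → ℕ → List ℕ → ℕ → Prop
  | refl {u : List ℕ} {x : ℕ} {g : HGraph (σ ⊕ ν)}
      (hg : graphAt G g0 u = some g) (hx : x ∈ g.V) (hint : x ∉ g.ext) :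
      InternalRel G g0 u x u x
  | up {u : List ℕ} {i x j : ℕ} {g gc : HGraph (σ ⊕ ν)} {e y : ℕ} {v : List ℕ} {z : ℕ}
      (hg : graphAt G g0 u = some g)
      (he : (ntEdgeList g)[i]? = some e)
      (hgc : graphAt G g0 (u ++ [i]) = some gc)
      (hx : gc.ext[j]? = some x) (hy : (g.att e)[j]? = some y)
      (hrec : InternalRel G g0 u y v z) :
      InternalRel G g0 (u ++ [i]) x v z

end HRG

/-- A tableau: a matrix of cells (each holding a pointer `nxt` and a vertex number
`vtx`), together with the column vectors `nt` and `first` and an offset.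
Rows and columns are 0-based; `nt i = none` denotes the start graph. -/
structure Tableau (ν : Type v) where
  rows : ℕ
  cols : ℕ
  nxt : ℕ → ℕ → Option (ℕ × ℕ)
  vtx : ℕ → ℕ → ℕ
  nt : ℕ → Option ν
  first : ℕ → ℕ
  off : ℕ

namespace Tableau

variable {ν : Type v}

/-- Following the `nxt` pointer of cell `(i,j)`, and one more pointer if the first
one is downwards (targets a row strictly below `i`). -/
def findVertex (t : Tableau ν) (i j : ℕ) : Option (ℕ × ℕ) :=
  match t.nxt i j with
  | none => none
  | some (i', j') => if i' ≤ i then some (i', j') else t.nxt i' j'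

/-- The cell of `t` redirected by `concat` for column `j`: the target of the
downwards pointer of the first-row cell `(0,j)`, if that pointer is downwards,
and `(0,j)` itself otherwise. -/
def downTarget (t : Tableau ν) (j : ℕ) : ℕ × ℕ :=
  match t.nxt 0 j with
  | some (i', j') => if 0 < i' then (i', j') else (0, j)
  | none => (0, j)

end Tableau

namespace HRG

variable {σ : Type u} {ν : Type v}

/-- The first `m` rows of the tableau `t` model the path from the root (labeled by
`graphOf root`) to the node `u` (with `m = |u| + 1`) of the derivation tree:
rows carry the correct nonterminals and (offset-adjusted) `first` values, and for
every external vertex of every row graph, `findVertex` reaches, in at most two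
pointer steps, the cell holding the internal vertex it is identified with
(a first-row cell with `vtx = 0` if no such vertex exists), and a pointer is
upwards iff no lower row shares its `findVertex` value. -/
def ModelsUpTo (G : HRG σ ν) [LinearOrder ν] (iN : ν → ℕ) (root : Option ν)
    (u : List ℕ) (t : Tableau ν) (m : ℕ) : Prop :=
  ∃ Bs : List ν, ntSeq G (G.graphOf root) u = some Bs ∧
    m = u.length + 1 ∧ m ≤ t.rows ∧
    (∀ i < m, t.nt i = (root :: Bs.map some).getD i root) ∧
    (∀ i < m, t.first i + t.off = firstAux G iN (G.graphOf root) (u.take i)) ∧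
    (∀ i < m, ∀ gi, graphAt G (G.graphOf root) (u.take i) = some gi →
      ∀ j y, gi.ext[j]? = some y →
        (∀ v z, InternalRel G (G.graphOf root) (u.take i) y v z →
          ∃ j', t.findVertex i j = some (v.length, j') ∧ t.vtx v.length j' = z) ∧
        ((¬ ∃ v z, InternalRel G (G.graphOf root) (u.take i) y v z) →
          ∃ j', t.findVertex i j = some (0, j') ∧ t.vtx 0 j' = 0) ∧
        ((∀ p ∈ t.nxt i j, p.1 ≤ i) ↔
          ¬ ∃ i' j', i < i' ∧ i' < m ∧ j' < t.cols ∧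
            t.findVertex i' j' = t.findVertex i j))

/-- The tableau `t` models the path from the root to the node `u` of the derivation
tree rooted at `graphOf root` (Definition of `tab(u)`): in addition to
`ModelsUpTo` for all rows, it has exactly `|u| + 1` rows, offset `0`, and all
out-of-range entries are `0`. -/
def Models (G : HRG σ ν) [LinearOrder ν] (iN : ν → ℕ) (root : Option ν)
    (u : List ℕ) (t : Tableau ν) : Prop :=
  ModelsUpTo G iN root u t (u.length + 1) ∧
  t.rows = u.length + 1 ∧ t.off = 0 ∧
  (∀ i j : ℕ, t.rows ≤ i ∨ t.cols ≤ j → t.nxt i j = none ∧ t.vtx i j = 0)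

/-- The one-row tableau `t_ε` for the root of the derivation tree of `root`:
every column `j < rank root` holds a self-loop (upwards) pointer, all other
entries are `0`. -/
def initTab (G : HRG σ ν) (root : Option ν) (κ : ℕ) : Tableau ν where
  rows := 1
  cols := κ
  nxt := fun a b => if a = 0 ∧ b < G.rankO root then some (0, b) else none
  vtx := fun _ _ => 0
  nt := fun _ => root
  first := fun _ => 0
  off := 0

/-- One step of Algorithm `createTableau`: extend the tableau `t`, which models a
path ending in a node labeled by nonterminal `B = nt (rows - 1)`, by a new bottom
row for the `l`-th child (the `l`-th nonterminal edge `e_l` of `rhs B`): for each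
`j < rank e_l`, with `x = att(e_l)[j]`, if `x` is internal then the new cell points
to the cell above which receives `vtx = x`; if `x` is the `j'`-th external vertex
of `rhs B` then the new cell takes over the pointer of cell `(rows-1, j')`, which
in turn points down to the new cell, and all pointers from higher rows targeting
`(rows-1, j')` are redirected to the new cell. -/
def extendTab (G : HRG σ ν) [LinearOrder ν] (iN : ν → ℕ) (t : Tableau ν) (l : ℕ) :
    Tableau ν :=
  let m := t.rows
  let g := G.graphOf (t.nt (m - 1))
  let es := ntEdgeList g
  let e := es.getD l 0
  let al := g.att e
  let isExtCol : ℕ → Bool := fun c =>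
    match g.ext[c]? with
    | some x => decide (x ∈ al)
    | none => false
  let newColOf : ℕ → ℕ := fun c =>
    match g.ext[c]? with
    | some x => List.idxOf x al
    | none => 0
  { rows := m + 1
    cols := t.cols
    nt := fun i => if i = m then
        (match g.lab e with
         | Sum.inr B => some B
         | Sum.inl _ => none)
      else t.nt i
    first := fun i => if i = m then
        t.first (m - 1) + g.V.card - g.ext.length + ((es.take l).map (iNOf iN g)).sum
      else t.first i
    off := t.off
    vtx := fun i j =>
      if i = m then 0
      else if i = m - 1 ∧ j < al.length ∧ al.getD j 0 ∉ g.ext then al.getD j 0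
      else t.vtx i j
    nxt := fun i j =>
      if i = m then
        (if j < al.length then
          (if al.getD j 0 ∈ g.ext then t.nxt (m - 1) (List.idxOf (al.getD j 0) g.ext)
           else some (m - 1, j))
         else none)
      else if i = m - 1 then
        (if isExtCol j then some (m, newColOf j) else t.nxt i j)
      else
        (match t.nxt i j with
         | some (i', c) => if i' = m - 1 ∧ isExtCol c then some (m, newColOf c) else some (i', c)
         | none => none) }

/-- Algorithm `createTableau`: the tableau for the node at address `u` of the
derivation tree rooted at `graphOf root`, built by starting from `initTab` and
extending one row per step along the path. -/
def createTableau (G : HRG σ ν) [LinearOrder ν] (iN : ν → ℕ) (κ : ℕ)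
    (root : Option ν) (u : List ℕ) : Tableau ν :=
  u.foldl (extendTab G iN) (initTab G root κ)

open Classical in
/-- Algorithm `concat` (as the resulting virtual tableau): concatenate `t₂`
(modeling a path in the derivation tree of the nonterminal at row `r` of `t₁`)
to row `r` of `t₁`; `kB` is the rank of that nonterminal. Rows `< r` are those
of `t₁`; rows `≥ r` come from `t₂`, with, for each column `j < kB`, the relevant
upwards pointer of `t₂` redirected to `findVertex(t₁(r,j))`, and with the
offset of `t₂` set to `t₁.off + t₁.first r`. -/
noncomputable def concatTab (t₂ t₁ : Tableau ν) (r kB : ℕ) : Tableau ν where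
  rows := r + t₂.rows
  cols := t₁.cols
  nt := fun i => if i < r then t₁.nt i else t₂.nt (i - r)
  first := fun i => if i < r then t₁.first i + t₁.off
    else t₂.first (i - r) + (t₁.off + t₁.first r)
  off := 0
  vtx := fun i j => if i < r then t₁.vtx i j else t₂.vtx (i - r) j
  nxt := fun i j =>
    if i < r then t₁.nxt i j
    else if h : ∃ j0, j0 < kB ∧ Tableau.downTarget t₂ j0 = (i - r, j) then
      t₁.findVertex r h.choose
    else (t₂.nxt (i - r) j).map (fun p => (p.1 + r, p.2))

end HRG

/-- The string graph with `N` consecutive `a`-labeled edges: vertices `1,…,N+1`,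
the `i`-th edge attached to `(i, i+1)`. -/
def pathGraph {L : Type u} (N : ℕ) (a : L) : HGraph L where
  V := Finset.Icc 1 (N + 1)
  E := Finset.Icc 1 N
  att := fun e => [e, e + 1]
  lab := fun _ => a
  ext := []

/-- The star grammar `G_n` of Figure `starGrammar1`: terminal alphabet `{a}` of rank 2,
nonterminals `A_0, …, A_{n-1}` of rank 2; the start graph has vertices `{1,2,3}` and
two `A_0`-edges attached to `(1,2)` and `(1,3)`; `rhs A_i` has vertices `{1,2,3}`,
external vertices `(2,3)`, and two edges labeled `A_{i+1}` (labeled `a` for `i = n-1`)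
attached to `(2,3)` and `(2,1)`. -/
def starG (n : ℕ) : HRG Unit (Fin n) where
  rankT := fun _ => 2
  rankN := fun _ => 2
  rhs := fun i =>
    { V := {1, 2, 3}
      E := {1, 2}
      att := fun e => if e = 1 then [2, 3] else [2, 1]
      lab := fun _ => if h : i.val + 1 < n then Sum.inr ⟨i.val + 1, h⟩ else Sum.inl ()
      ext := [2, 3] }
  start :=
    { V := {1, 2, 3}
      E := {1, 2}
      att := fun e => if e = 1 then [1, 2] else [1, 3]
      lab := fun _ => if h : 0 < n then Sum.inr ⟨0, h⟩ else Sum.inl ()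
      ext := [] }

section Statements

open HGraph HRG

/-! Both orders delete `e₁` and `e₂` and glue two copies of `h` onto the common attachment
sequence `g.att e₁ = g.att e₂`. The new vertex numbers depend only on the vertex count, which
is the same after either first step, and the new edge numbers only on `g.freshE` and `h`, so
the two results agree literally on vertices, edges, attachments and labels. -/

namespace HGraph

variable {L : Type*}

def Iso.ofEqOn {g g' : HGraph L} (hV : g.V = g'.V) (hE : g.E = g'.E)
    (hatt : Set.EqOn g.att g'.att g.E) (hlab : Set.EqOn g.lab g'.lab g.E)
    (hext : g.ext = g'.ext) : Iso g g' where
  vmap := id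
  emap := id
  vmap_bij := hV ▸ Set.bijOn_id _
  emap_bij := hE ▸ Set.bijOn_id _
  att_map e he := by rw [List.map_id, id, ← hatt he]
  lab_map e he := (hlab he).symm
  ext_map := by rw [List.map_id, hext]

lemma lt_freshE {g : HGraph L} {e : ℕ} (he : e ∈ g.E) : e < g.freshE :=
  Nat.lt_succ_of_le (Finset.le_sup (f := id) he)

lemma renameVN_congr {g₁ g₂ : HGraph L} {e₁ e₂ : ℕ} (h : HGraph L) (n : ℕ)
    (hatt : g₁.att e₁ = g₂.att e₂) : renameVN g₁ e₁ h n = renameVN g₂ e₂ h n := by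
  funext x
  rw [renameVN, renameVN, hatt]

lemma replaceVN_E (g : HGraph L) (e : ℕ) (h : HGraph L) (n : ℕ) :
    (g.replaceVN e h n).E = g.E.erase e ∪ h.E.image (g.freshE + ·) := rfl

section replaceVN

variable {g : HGraph L} {e : ℕ} {h : HGraph L} {n : ℕ}

lemma mem_replaceVN_E_of_mem {f : ℕ} (hf : f ∈ g.E) (hfe : f ≠ e) :
    f ∈ (g.replaceVN e h n).E :=
  Finset.mem_union_left _ (Finset.mem_erase.2 ⟨hfe, hf⟩)

lemma freshE_add_mem_replaceVN_E {f : ℕ} (hf : f ∈ h.E) :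
    g.freshE + f ∈ (g.replaceVN e h n).E :=
  Finset.mem_union_right _ (Finset.mem_image_of_mem _ hf)

lemma replaceVN_att_of_mem {f : ℕ} (hf : f ∈ g.E) (hfe : f ≠ e) :
    (g.replaceVN e h n).att f = g.att f :=
  if_pos (Finset.mem_erase.2 ⟨hfe, hf⟩)

lemma replaceVN_lab_of_mem {f : ℕ} (hf : f ∈ g.E) (hfe : f ≠ e) :
    (g.replaceVN e h n).lab f = g.lab f :=
  if_pos (Finset.mem_erase.2 ⟨hfe, hf⟩)

lemma freshE_add_notMem (f : ℕ) : g.freshE + f ∉ g.E := fun hf =>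
  (lt_freshE hf).not_ge (Nat.le_add_right _ _)

lemma freshE_add_ne {e' : ℕ} (he' : e' ∈ g.E) (f : ℕ) : g.freshE + f ≠ e' := fun hf =>
  freshE_add_notMem f (hf ▸ he')

lemma freshE_add_notMem_erase (e f : ℕ) : g.freshE + f ∉ g.E.erase e := fun hf =>
  freshE_add_notMem f (Finset.mem_of_mem_erase hf)

lemma replaceVN_att_freshE_add (f : ℕ) :
    (g.replaceVN e h n).att (g.freshE + f) = (h.att f).map (renameVN g e h n) := by
  simp only [replaceVN, if_neg (freshE_add_notMem_erase e f), Nat.add_sub_cancel_left]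

lemma replaceVN_lab_freshE_add (f : ℕ) :
    (g.replaceVN e h n).lab (g.freshE + f) = h.lab f := by
  simp only [replaceVN, if_neg (freshE_add_notMem_erase e f), Nat.add_sub_cancel_left]

lemma freshE_replaceVN (hh : h.E.Nonempty) :
    (g.replaceVN e h n).freshE = g.freshE + h.freshE := by
  obtain ⟨f, hf, hfmax⟩ := h.E.exists_mem_eq_sup hh id
  have hle : (g.replaceVN e h n).E.sup id ≤ g.freshE + f := by
    refine Finset.sup_le fun x hx => ?_
    rcases Finset.mem_union.1 hx with hx | hx
    · exact (lt_freshE (Finset.mem_of_mem_erase hx)).le.trans (Nat.le_add_right _ _)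
    · obtain ⟨b, hb, rfl⟩ := Finset.mem_image.1 hx
      exact Nat.add_le_add_left ((Finset.le_sup (f := id) hb).trans_eq hfmax) _
  have hge : g.freshE + f ≤ (g.replaceVN e h n).E.sup id :=
    Finset.le_sup (f := id) (freshE_add_mem_replaceVN_E hf)
  simp only [freshE, id] at hle hge hfmax ⊢
  omega

end replaceVN

section replaceVN_comm

variable {g : HGraph L} {e₁ e₂ : ℕ} {h : HGraph L} {n n' : ℕ}

lemma erase_replaceVN_E {e : ℕ} (he : e ∈ g.E) (e' : ℕ) :
    (g.replaceVN e' h n).E.erase e = (g.E.erase e').erase e ∪ h.E.image (g.freshE + ·) := by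
  have hfresh : e ∉ h.E.image (g.freshE + ·) := fun hmem => by
    obtain ⟨f, -, hf⟩ := Finset.mem_image.1 hmem
    exact freshE_add_ne he f hf
  rw [replaceVN_E, Finset.erase_union_distrib, Finset.erase_eq_of_notMem hfresh]

lemma replaceVN_replaceVN_E_comm (he₁ : e₁ ∈ g.E) (he₂ : e₂ ∈ g.E) :
    ((g.replaceVN e₁ h n).replaceVN e₂ h n').E = ((g.replaceVN e₂ h n).replaceVN e₁ h n').E := by
  rw [replaceVN_E (g.replaceVN e₁ h n), replaceVN_E (g.replaceVN e₂ h n),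
    erase_replaceVN_E he₂, erase_replaceVN_E he₁, Finset.erase_right_comm]
  rcases h.E.eq_empty_or_nonempty with hh | hh
  · simp only [hh, Finset.image_empty]
  · rw [freshE_replaceVN hh, freshE_replaceVN hh]

lemma mem_replaceVN_replaceVN_E {x : ℕ} (he₂ : e₂ ∈ g.E)
    (hx : x ∈ ((g.replaceVN e₁ h n).replaceVN e₂ h n').E) :
    (x ∈ g.E ∧ x ≠ e₁ ∧ x ≠ e₂) ∨ (∃ f ∈ h.E, x = g.freshE + f) ∨
      ∃ f ∈ h.E, x = (g.replaceVN e₁ h n).freshE + f := by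
  rw [replaceVN_E, erase_replaceVN_E he₂] at hx
  simp only [Finset.mem_union, Finset.mem_erase, Finset.mem_image] at hx
  rcases hx with (⟨hx₂, hx₁, hx⟩ | ⟨f, hf, rfl⟩) | ⟨f, hf, rfl⟩
  · exact Or.inl ⟨hx, hx₁, hx₂⟩
  · exact Or.inr (Or.inl ⟨f, hf, rfl⟩)
  · exact Or.inr (Or.inr ⟨f, hf, rfl⟩)

lemma freshE_replaceVN_comm {f : ℕ} (hf : f ∈ h.E) :
    (g.replaceVN e₁ h n).freshE = (g.replaceVN e₂ h n).freshE := by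
  rw [freshE_replaceVN ⟨f, hf⟩, freshE_replaceVN ⟨f, hf⟩]

lemma replaceVN_replaceVN_att_comm (he₁ : e₁ ∈ g.E) (he₂ : e₂ ∈ g.E) (hne : e₁ ≠ e₂)
    (hatt : g.att e₁ = g.att e₂) :
    Set.EqOn ((g.replaceVN e₁ h n).replaceVN e₂ h n').att
      ((g.replaceVN e₂ h n).replaceVN e₁ h n').att
      ((g.replaceVN e₁ h n).replaceVN e₂ h n').E := by
  intro x hx
  rcases mem_replaceVN_replaceVN_E he₂ hx with ⟨hx, hx₁, hx₂⟩ | ⟨f, hf, rfl⟩ | ⟨f, hf, rfl⟩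
  · rw [replaceVN_att_of_mem (mem_replaceVN_E_of_mem hx hx₁) hx₂,
      replaceVN_att_of_mem (mem_replaceVN_E_of_mem hx hx₂) hx₁,
      replaceVN_att_of_mem hx hx₁, replaceVN_att_of_mem hx hx₂]
  · rw [replaceVN_att_of_mem (freshE_add_mem_replaceVN_E hf) (freshE_add_ne he₂ f),
      replaceVN_att_of_mem (freshE_add_mem_replaceVN_E hf) (freshE_add_ne he₁ f),
      replaceVN_att_freshE_add, replaceVN_att_freshE_add, renameVN_congr h n hatt]
  · have hatt' : (g.replaceVN e₁ h n).att e₂ = (g.replaceVN e₂ h n).att e₁ := by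
      rw [replaceVN_att_of_mem he₂ hne.symm, replaceVN_att_of_mem he₁ hne, hatt]
    rw [replaceVN_att_freshE_add, freshE_replaceVN_comm hf, replaceVN_att_freshE_add,
      renameVN_congr h n' hatt']

lemma replaceVN_replaceVN_lab_comm (he₁ : e₁ ∈ g.E) (he₂ : e₂ ∈ g.E) :
    Set.EqOn ((g.replaceVN e₁ h n).replaceVN e₂ h n').lab
      ((g.replaceVN e₂ h n).replaceVN e₁ h n').lab
      ((g.replaceVN e₁ h n).replaceVN e₂ h n').E := by
  intro x hx
  rcases mem_replaceVN_replaceVN_E he₂ hx with ⟨hx, hx₁, hx₂⟩ | ⟨f, hf, rfl⟩ | ⟨f, hf, rfl⟩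
  · rw [replaceVN_lab_of_mem (mem_replaceVN_E_of_mem hx hx₁) hx₂,
      replaceVN_lab_of_mem (mem_replaceVN_E_of_mem hx hx₂) hx₁,
      replaceVN_lab_of_mem hx hx₁, replaceVN_lab_of_mem hx hx₂]
  · rw [replaceVN_lab_of_mem (freshE_add_mem_replaceVN_E hf) (freshE_add_ne he₂ f),
      replaceVN_lab_of_mem (freshE_add_mem_replaceVN_E hf) (freshE_add_ne he₁ f),
      replaceVN_lab_freshE_add, replaceVN_lab_freshE_add]
  · rw [replaceVN_lab_freshE_add, freshE_replaceVN_comm hf, replaceVN_lab_freshE_add]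

end replaceVN_comm

end HGraph

theorem stmt3_general {L : Type} (g h : HGraph L)
    (e₁ e₂ : ℕ) (he₁ : e₁ ∈ g.E) (he₂ : e₂ ∈ g.E) (hne : e₁ ≠ e₂)
    (hatt : g.att e₁ = g.att e₂) :
    ∃ iso : HGraph.Iso
        ((g.replaceVN e₁ h g.V.card).replaceVN e₂ h (g.replaceVN e₁ h g.V.card).V.card)
        ((g.replaceVN e₂ h g.V.card).replaceVN e₁ h (g.replaceVN e₂ h g.V.card).V.card),
      ∀ v ∈ ((g.replaceVN e₁ h g.V.card).replaceVN e₂ h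
          (g.replaceVN e₁ h g.V.card).V.card).V, iso.vmap v = v :=
  ⟨Iso.ofEqOn rfl (replaceVN_replaceVN_E_comm he₁ he₂)
    (replaceVN_replaceVN_att_comm he₁ he₂ hne hatt)
    (replaceVN_replaceVN_lab_comm he₁ he₂) rfl, fun _ _ => rfl⟩

theorem stmt3 {L : Type} (rank : L → ℕ) (g h : HGraph L) (n m : ℕ)
    (hg : g.WF rank) (hh : h.WF rank)
    (hgn : g.VertexNumbered n) (hhm : h.VertexNumbered m)
    (e₁ e₂ : ℕ) (he₁ : e₁ ∈ g.E) (he₂ : e₂ ∈ g.E) (hne : e₁ ≠ e₂)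
    (hatt : g.att e₁ = g.att e₂) (hlab : g.lab e₁ = g.lab e₂)
    (hrk : h.ext.length = (g.att e₁).length) :
    ∃ iso : HGraph.Iso
        ((g.replaceVN e₁ h g.V.card).replaceVN e₂ h (g.replaceVN e₁ h g.V.card).V.card)
        ((g.replaceVN e₂ h g.V.card).replaceVN e₁ h (g.replaceVN e₂ h g.V.card).V.card),
      ∀ v ∈ ((g.replaceVN e₁ h g.V.card).replaceVN e₂ h
          (g.replaceVN e₁ h g.V.card).V.card).V, iso.vmap v = v :=
  stmt3_general g h e₁ e₂ he₁ he₂ hne hatt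

end Statements
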